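/- arXiv:2009.13045 — 3 statements merged into one kernel-verified Lean document; each statement's English description precedes it below -/
import Mathlib

section
/- Let X be a compact metrizable space, let Y ⊆ X be a closed subset, and let 𝒱 be a finite open cover of the topological space Y (i.e., a finite collection of nonempty open subsets of Y whose union is Y). Then there exists a finite collection 𝒲 of nonempty open subsets of X whose union contains Y, such that ord(𝒲) ≤ ord(𝒱) and such that 𝒲 ∩ Y refines 𝒱 (as open covers of the space Y). -/
/-!
Fix a compatible metric on `X` and replace each `V ∈ 𝒱` by the open set of points strictly
nearer to `Y` than to `Y \ V`. This set contains `V` (as `Y \ V` is closed), and a nearest point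
of `Y` to any of its points lies in `V`. Choosing for `x ∈ X` a nearest point `y ∈ Y` (by
compactness of `Y`), every enlarged set containing `x` comes from some `V ∋ y`, so the order
does not increase.
-/

open scoped Classical

/-- The order of a finite collection of subsets of `X`:
`max_x Card {U ∈ 𝒰 : x ∈ U} - 1`. -/
noncomputable def coverOrder {X : Type*} (𝒰 : Finset (Set X)) : ℕ :=
  ⨆ x : X, ((𝒰.filter fun U => x ∈ U).card - 1)

open Metric

theorem card_filter_mem_sub_one_le_coverOrder {X : Type*} (𝒰 : Finset (Set X)) (x : X) :
    (𝒰.filter fun U => x ∈ U).card - 1 ≤ coverOrder 𝒰 := by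
  refine le_ciSup (f := fun z => (𝒰.filter fun U => z ∈ U).card - 1) ⟨𝒰.card, ?_⟩ x
  rintro _ ⟨z, rfl⟩
  exact (Nat.sub_le _ _).trans (Finset.card_filter_le _ _)

theorem coverOrder_image_le {X Y : Type*} (𝒱 : Finset (Set X)) (g : Set X → Set Y)
    (h : ∀ x, ∃ y, ∀ V ∈ 𝒱, x ∈ g V → y ∈ V) :
    coverOrder (𝒱.image g) ≤ coverOrder 𝒱 := by
  refine ciSup_le' fun x => ?_
  obtain ⟨y, hy⟩ := h x
  have hsub : ((𝒱.image g).filter fun W => x ∈ W) ⊆ (𝒱.filter fun V => y ∈ V).image g := by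
    intro W hW
    obtain ⟨hW𝒱, hxW⟩ := Finset.mem_filter.mp hW
    obtain ⟨V, hV, rfl⟩ := Finset.mem_image.mp hW𝒱
    exact Finset.mem_image_of_mem g (Finset.mem_filter.mpr ⟨hV, hy V hV hxW⟩)
  calc ((𝒱.image g).filter fun W => x ∈ W).card - 1
      ≤ (𝒱.filter fun V => y ∈ V).card - 1 :=
        Nat.sub_le_sub_right ((Finset.card_le_card hsub).trans Finset.card_image_le) 1
    _ ≤ coverOrder 𝒱 := card_filter_mem_sub_one_le_coverOrder 𝒱 y

section NearerTo

variable {α : Type*} [PseudoEMetricSpace α]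

/-- Extended distances are used so that `infEDist x ∅ = ∞`: with the real `infDist`, which is
`0` at `∅`, `nearerTo Y ∅` would be empty instead of the whole space (for `Y ≠ ∅`). -/
def nearerTo (Y Z : Set α) : Set α :=
  {x | infEDist x Y < infEDist x Z}

theorem isOpen_nearerTo (Y Z : Set α) : IsOpen (nearerTo Y Z) :=
  isOpen_lt continuous_infEDist continuous_infEDist

@[simp]
theorem nearerTo_empty_left (Z : Set α) : nearerTo ∅ Z = ∅ := by
  simp [nearerTo, infEDist_empty]

theorem mem_nearerTo_of_mem_of_notMem_closure {Y Z : Set α} {x : α} (hxY : x ∈ Y)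
    (hxZ : x ∉ closure Z) : x ∈ nearerTo Y Z := by
  simpa [nearerTo, infEDist_zero_of_mem hxY] using infEDist_pos_iff_notMem_closure.mpr hxZ

theorem notMem_of_mem_nearerTo {Y Z : Set α} {x y : α} (hx : x ∈ nearerTo Y Z)
    (hy : edist x y = infEDist x Y) : y ∉ Z := fun hyZ =>
  ((infEDist_le_edist_of_mem hyZ).trans_eq hy).not_gt hx

theorem notMem_of_mem_nearerTo_of_mem {Y Z : Set α} {x : α} (hx : x ∈ nearerTo Y Z)
    (hxY : x ∈ Y) : x ∉ Z :=
  notMem_of_mem_nearerTo hx (by rw [edist_self, infEDist_zero_of_mem hxY])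

theorem IsCompact.exists_forall_mem_of_mem_nearerTo {Y : Set α} (hY : IsCompact Y) (x : α) :
    ∃ y, ∀ V, x ∈ nearerTo Y (Y \ V) → y ∈ V := by
  rcases Y.eq_empty_or_nonempty with rfl | hne
  · exact ⟨x, fun V hx => by simp [nearerTo_empty_left] at hx⟩
  · obtain ⟨y, hyY, hxy⟩ := hY.exists_infEDist_eq_edist hne x
    refine ⟨y, fun V hx => ?_⟩
    by_contra hyV
    exact notMem_of_mem_nearerTo hx hxy.symm ⟨hyY, hyV⟩

end NearerTo

/-- Let `X` be a compact metrizable space, `Y ⊆ X` closed, and `𝒱` a finite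
open cover of the topological space `Y` (a finite collection of nonempty relatively open
subsets of `Y` whose union is `Y`).  Then there is a finite collection `𝒲` of nonempty open
subsets of `X` whose union contains `Y`, with `ord 𝒲 ≤ ord 𝒱`, and such that `𝒲 ∩ Y`
refines `𝒱`. -/
theorem stmt0 {X : Type*} [TopologicalSpace X] [CompactSpace X]
    [TopologicalSpace.MetrizableSpace X]
    (Y : Set X) (hY : IsClosed Y)
    (𝒱 : Finset (Set X))
    (h𝒱open : ∀ V ∈ 𝒱, ∃ O : Set X, IsOpen O ∧ V = O ∩ Y)
    (h𝒱ne : ∀ V ∈ 𝒱, V.Nonempty)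
    (h𝒱cover : (⋃ V ∈ 𝒱, V) = Y) :
    ∃ 𝒲 : Finset (Set X),
      (∀ W ∈ 𝒲, IsOpen W ∧ W.Nonempty) ∧
      Y ⊆ ⋃ W ∈ 𝒲, W ∧
      coverOrder 𝒲 ≤ coverOrder 𝒱 ∧
      (∀ W ∈ 𝒲, (W ∩ Y).Nonempty → ∃ V ∈ 𝒱, W ∩ Y ⊆ V) := by
  let := TopologicalSpace.metrizableSpaceMetric X
  have hsub : ∀ V ∈ 𝒱, V ⊆ nearerTo Y (Y \ V) := by
    intro V hV v hv
    obtain ⟨O, hO, rfl⟩ := h𝒱open V hV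
    have hclosed : IsClosed (Y \ (O ∩ Y)) := by
      rw [Set.sdiff_inter_self_eq_sdiff]
      exact hY.sdiff hO
    refine mem_nearerTo_of_mem_of_notMem_closure hv.2 ?_
    rw [hclosed.closure_eq]
    exact fun hvZ => hvZ.2 hv
  refine ⟨𝒱.image fun V => nearerTo Y (Y \ V), ?_, ?_, ?_, ?_⟩
  · simp only [Finset.mem_image, forall_exists_index, and_imp, forall_apply_eq_imp_iff₂]
    exact fun V hV => ⟨isOpen_nearerTo _ _, (h𝒱ne V hV).mono (hsub V hV)⟩
  · intro y hy
    rw [← h𝒱cover, Set.mem_iUnion₂] at hy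
    obtain ⟨V, hV, hyV⟩ := hy
    exact Set.mem_biUnion (Finset.mem_image_of_mem _ hV) (hsub V hV hyV)
  · exact coverOrder_image_le 𝒱 _ fun x =>
      (hY.isCompact.exists_forall_mem_of_mem_nearerTo x).imp fun y hy V _ => hy V
  · simp only [Finset.mem_image, forall_exists_index, and_imp, forall_apply_eq_imp_iff₂]
    refine fun V hV _ => ⟨V, hV, fun x ⟨hx, hxY⟩ => ?_⟩
    by_contra hxV
    exact notMem_of_mem_nearerTo_of_mem hx hxY ⟨hxY, hxV⟩
end

section
/- Let G be a group, let N ⊴ G be a normal subgroup of finite index, and let S ⊆ G be a complete set of representatives for the left cosets of N in G, with 1 ∈ S. Let G₀ ⊆ G be a finite subset and let ε > 0. Set M = N ∩ { s⁻¹ g t : g ∈ G₀, s, t ∈ S }. If F₀ ⊆ N is a nonempty finite (M, ε)-invariant subset, then F = S·F₀ satisfies Card(F) = Card(S)·Card(F₀) and F is (G₀, ε)-invariant. -/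
open scoped Classical Pointwise

/-- `F` is a `(G₀, δ)`-invariant subset of the group `G`:
`F` is nonempty and `Card (gF ∩ F) > (1 - δ) · Card F` for all `g ∈ G₀`. -/
def IsApproxInvariant {G : Type*} [Group G] [DecidableEq G]
    (G₀ : Finset G) (δ : ℝ) (F : Finset G) : Prop :=
  F.Nonempty ∧ ∀ g ∈ G₀, ((1 - δ) * F.card : ℝ) < (((F.image fun x => g * x) ∩ F).card : ℝ)

/-- Let `N ⊴ G` have finite index, let `S` be a complete set of
representatives of the left cosets of `N` with `1 ∈ S`, let `G₀ ⊆ G` be finite and `ε > 0`.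
Set `M = N ∩ {s⁻¹ g t : g ∈ G₀, s, t ∈ S}`.  If `F₀ ⊆ N` is a nonempty finite
`(M, ε)`-invariant set, then `F = S·F₀` satisfies `Card F = Card S · Card F₀` and `F` is
`(G₀, ε)`-invariant. -/
theorem stmt4 {G : Type*} [Group G] [DecidableEq G]
    (N : Subgroup G) (hN : N.Normal) (hNfi : N.FiniteIndex)
    (S : Finset G) (hS1 : (1 : G) ∈ S)
    (hSrep : ∀ g : G, ∃! s, s ∈ S ∧ s⁻¹ * g ∈ N)
    (G₀ : Finset G) (ε : ℝ) (hε : 0 < ε)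
    (F₀ : Finset G) (hF₀N : ∀ x ∈ F₀, x ∈ N)
    (hF₀inv : IsApproxInvariant
      (((G₀ ×ˢ (S ×ˢ S)).image fun p => p.2.1⁻¹ * p.1 * p.2.2).filter fun x => x ∈ N)
      ε F₀) :
    (S * F₀).card = S.card * F₀.card ∧ IsApproxInvariant G₀ ε (S * F₀) := by
  classical
  obtain ⟨hF₀ne, hF₀⟩ := hF₀inv
  have key : ∀ s ∈ S, ∀ s' ∈ S, s⁻¹ * s' ∈ N → s = s' := by
    intro s hs s' hs' h
    obtain ⟨u, -, hu⟩ := hSrep s'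
    rw [hu s ⟨hs, h⟩, hu s' ⟨hs', by simpa using one_mem N⟩]
  have hcard : (S * F₀).card = S.card * F₀.card := by
    rw [Finset.card_mul_iff]
    rintro ⟨s, f⟩ ⟨hs, hf⟩ ⟨s', f'⟩ ⟨hs', hf'⟩ h
    simp only [Finset.mem_coe] at hs hf hs' hf'
    simp only at h
    have h1 : s⁻¹ * s' = f * f'⁻¹ := by
      rw [inv_mul_eq_iff_eq_mul, ← mul_assoc, h, mul_assoc, mul_inv_cancel, mul_one]
    have hss : s = s' :=
      key s hs s' hs' (h1 ▸ mul_mem (hF₀N f hf) (inv_mem (hF₀N f' hf')))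
    subst hss
    have : f = f' := by
      have := h
      exact mul_left_cancel this
    simp [this]
  refine ⟨hcard, Finset.Nonempty.mul ⟨1, hS1⟩ hF₀ne, ?_⟩
  intro g hg
  choose t htS htN using fun s => (hSrep (g * s)).exists
  set B : G → Finset G := fun s =>
    ((F₀.image fun x => ((t s)⁻¹ * g * s) * x) ∩ F₀).image fun y => t s * y with hBdef
  -- each B s sits in the target
  have hBsub : ∀ s ∈ S, B s ⊆ (((S * F₀).image fun x => g * x) ∩ (S * F₀)) := by
    intro s hs z hz
    simp only [hBdef, Finset.mem_image, Finset.mem_inter] at hz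
    obtain ⟨y, ⟨⟨x, hx, hyx⟩, hyF⟩, rfl⟩ := hz
    refine Finset.mem_inter.2 ⟨?_, Finset.mul_mem_mul (htS s) hyF⟩
    refine Finset.mem_image.2 ⟨s * x, Finset.mul_mem_mul hs hx, ?_⟩
    rw [← hyx]; group
  -- pairwise disjoint
  have hdisj : ∀ s ∈ S, ∀ s' ∈ S, s ≠ s' → Disjoint (B s) (B s') := by
    intro s hs s' hs' hne
    rw [Finset.disjoint_left]
    intro z hz hz'
    simp only [hBdef, Finset.mem_image, Finset.mem_inter] at hz hz'
    obtain ⟨y, ⟨-, hyF⟩, hy⟩ := hz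
    obtain ⟨y', ⟨-, hyF'⟩, hy'⟩ := hz'
    have heq : t s * y = t s' * y' := hy.trans hy'.symm
    have h1 : (t s)⁻¹ * t s' = y * y'⁻¹ := by
      rw [inv_mul_eq_iff_eq_mul, ← mul_assoc, heq, mul_assoc, mul_inv_cancel, mul_one]
    have htt : t s = t s' :=
      key _ (htS s) _ (htS s')
        (h1 ▸ mul_mem (hF₀N y hyF) (inv_mem (hF₀N y' hyF')))
    apply hne
    refine key s hs s' hs' ?_
    have h2 : s⁻¹ * s' = ((t s)⁻¹ * (g * s))⁻¹ * ((t s')⁻¹ * (g * s')) := by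
      rw [htt]; group
    exact h2 ▸ mul_mem (inv_mem (htN s)) (htN s')
  have hScard : ∀ s, (B s).card
      = ((F₀.image fun x => ((t s)⁻¹ * g * s) * x) ∩ F₀).card :=
    fun s => Finset.card_image_of_injective _ (mul_right_injective _)
  have hmem : ∀ s ∈ S, ((t s)⁻¹ * g * s) ∈
      ((G₀ ×ˢ (S ×ˢ S)).image fun p => p.2.1⁻¹ * p.1 * p.2.2).filter fun x => x ∈ N := by
    intro s hs
    refine Finset.mem_filter.2 ⟨Finset.mem_image.2 ⟨(g, (t s, s)), ?_, rfl⟩, ?_⟩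
    · exact Finset.mem_product.2 ⟨hg, Finset.mem_product.2 ⟨htS s, hs⟩⟩
    · have := htN s; rwa [← mul_assoc] at this
  have hlt : ∀ s ∈ S, ((1 - ε) * F₀.card : ℝ) < ((B s).card : ℝ) := by
    intro s hs
    rw [hScard s]
    exact hF₀ _ (hmem s hs)
  calc ((1 - ε) * (S * F₀).card : ℝ)
      = ∑ s ∈ S, ((1 - ε) * (F₀.card : ℝ)) := by
        rw [Finset.sum_const, hcard]; push_cast; ring
    _ < ∑ s ∈ S, ((B s).card : ℝ) :=
        Finset.sum_lt_sum_of_nonempty ⟨1, hS1⟩ hlt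
    _ = ((S.biUnion B).card : ℝ) := by
        rw [Finset.card_biUnion hdisj]; push_cast; ring
    _ ≤ _ := by
        exact_mod_cast Nat.cast_le.2 (Finset.card_le_card (Finset.biUnion_subset.2 hBsub))
end

section
/- Let G be a group, let G₁ ⊆ G be a nonempty finite subset with 1 ∈ G₁, let ε > 0, and let F ⊆ G be a nonempty finite subset which is (G₁⁻¹, ε)-invariant, where G₁⁻¹ = { h⁻¹ : h ∈ G₁ }. Then Card(G₁·F) < (1 + Card(G₁)·ε) · Card(F). -/
open scoped Classical Pointwise

/-- Let `G₁ ⊆ G` be a nonempty finite subset with `1 ∈ G₁`, let `ε > 0`, and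
let `F` be a nonempty finite `(G₁⁻¹, ε)`-invariant subset.  Then
`Card (G₁·F) < (1 + Card G₁ · ε) · Card F`. -/
theorem stmt6 {G : Type*} [Group G] [DecidableEq G]
    (G₁ : Finset G) (hG₁ : G₁.Nonempty) (h1 : (1 : G) ∈ G₁) (ε : ℝ) (hε : 0 < ε)
    (F : Finset G) (hF : IsApproxInvariant G₁⁻¹ ε F) :
    ((G₁ * F).card : ℝ) < (1 + (G₁.card : ℝ) * ε) * (F.card : ℝ) := by
  obtain ⟨hFne, hinv⟩ := hF
  have hFpos : (0:ℝ) < F.card := by exact_mod_cast Finset.card_pos.mpr hFne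
  have key : ∀ g ∈ G₁, (((F.image fun x => g * x) \ F).card : ℝ) < ε * F.card := by
    intro g hg
    have hg' : g⁻¹ ∈ G₁⁻¹ := Finset.inv_mem_inv hg
    have h := hinv g⁻¹ hg'
    have hcard : ((F.image fun x => g⁻¹ * x) ∩ F).card
        = ((F.image fun x => g * x) ∩ F).card := by
      rw [← Finset.card_image_of_injective ((F.image fun x => g⁻¹ * x) ∩ F)
        (mul_right_injective g)]
      congr 1
      rw [Finset.image_inter _ _ (mul_right_injective g), Finset.image_image]
      simp [Function.comp, Finset.inter_comm]
    have himg : (F.image fun x => g * x).card = F.card :=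
      Finset.card_image_of_injective _ (mul_right_injective g)
    have h2 : ((F.image fun x => g * x) ∩ F).card
        + ((F.image fun x => g * x) \ F).card = F.card := by
      rw [Finset.card_inter_add_card_sdiff, himg]
    have h3 : ((1 - ε) * F.card : ℝ) < (((F.image fun x => g * x) ∩ F).card : ℝ) := by
      rw [← hcard]; exact h
    have h4 : (((F.image fun x => g * x) ∩ F).card : ℝ)
        + (((F.image fun x => g * x) \ F).card : ℝ) = F.card := by exact_mod_cast h2
    nlinarith
  have hsub : (G₁ * F) ⊆ F ∪ G₁.biUnion (fun g => (F.image fun x => g * x) \ F) := by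
    intro x hx
    rw [Finset.mem_mul] at hx
    obtain ⟨g, hg, f, hf, rfl⟩ := hx
    by_cases hxF : g * f ∈ F
    · exact Finset.mem_union_left _ hxF
    · refine Finset.mem_union_right _ (Finset.mem_biUnion.mpr ⟨g, hg, ?_⟩)
      exact Finset.mem_sdiff.mpr ⟨Finset.mem_image.mpr ⟨f, hf, rfl⟩, hxF⟩
  have hle : ((G₁*F).card : ℝ)
      ≤ (F.card : ℝ) + ∑ g ∈ G₁, (((F.image fun x => g * x) \ F).card : ℝ) := by
    have h1' := Finset.card_le_card hsub
    have h2' := Finset.card_union_le F (G₁.biUnion (fun g => (F.image fun x => g * x) \ F))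
    have h3' := Finset.card_biUnion_le (s := G₁) (t := fun g => (F.image fun x => g * x) \ F)
    have : (G₁*F).card ≤ F.card + ∑ g ∈ G₁, ((F.image fun x => g * x) \ F).card := by
      omega
    push_cast
    exact_mod_cast this
  have hsum : ∑ g ∈ G₁, (((F.image fun x => g * x) \ F).card : ℝ)
      < ∑ g ∈ G₁, ε * F.card :=
    Finset.sum_lt_sum_of_nonempty hG₁ key
  have hconst : ∑ g ∈ G₁, (ε * (F.card:ℝ)) = (G₁.card : ℝ) * (ε * F.card) := by
    rw [Finset.sum_const, nsmul_eq_mul]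
  nlinarith
end
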